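/- Let V, W be finite-dimensional ℂ-vector spaces, c ∣ d, M = Hom_{R_c}(W⊗R_c, V⊗R_d) ⊕ Hom_{R_c}(V⊗R_d, W⊗R_c) with symplectic form ω = ⟨dX ∧ dY⟩_c, and let G_d(V) = Aut_{R_d}(V⊗R_d) act by g·(X,Y) = (gX, Yg⁻¹). Then the map μ(X,Y) = X^{R_d}Y^{R_d} ∈ End_{R_d}(V⊗R_d) ≅ End_{R_d}(V⊗R_d)* is a moment map generating this action, i.e. d⟨μ,ξ⟩_d = ι_{ξ*}ω for all ξ ∈ End_{R_d}(V⊗R_d), where ξ*_{(X,Y)} = (ξX, -Yξ). -/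

import Mathlib

open Polynomial Finset

/-- The truncated polynomial ring `R_d = ℂ[ε]/(ε^d)`. -/
abbrev Rmod (d : ℕ) : Type := AdjoinRoot (X ^ d : ℂ[X])

/-- The class of the variable `ε` in `R_d`. -/
noncomputable def eps (d : ℕ) : Rmod d := AdjoinRoot.root _

/-- The coefficient of `ε^k` of (the canonical representative of) an element of `R_d`. -/
noncomputable def coeffD (d : ℕ) (k : ℕ) (f : Rmod d) : ℂ :=
  (AdjoinRoot.modByMonicHom (monic_X_pow d) f).coeff k

/-- The residue `res_{ε=0}(f dε/ε^d)`, i.e. the coefficient of `ε^{d-1}`. -/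
noncomputable def res (d : ℕ) (f : Rmod d) : ℂ := coeffD d (d - 1) f

namespace Stmt6Aux

lemma coeffD_mk (d k : ℕ) (hk : k < d) (F : ℂ[X]) :
    coeffD d k (AdjoinRoot.mk _ F) = F.coeff k := by
  unfold coeffD
  rw [AdjoinRoot.modByMonicHom_mk, Polynomial.modByMonic_eq_sub_mul_div _ (X ^ d),
    Polynomial.coeff_sub, Polynomial.coeff_X_pow_mul']
  simp [Nat.not_le_of_lt hk, hk.le]

noncomputable def coeffDL (d k : ℕ) : Rmod d →ₗ[ℂ] ℂ :=
  (Polynomial.lcoeff ℂ k).comp (AdjoinRoot.modByMonicHom (monic_X_pow d))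

lemma coeffD_eq (d k : ℕ) (f : Rmod d) : coeffD d k f = coeffDL d k f := rfl

lemma coeffD_add (d k : ℕ) (f g : Rmod d) :
    coeffD d k (f + g) = coeffD d k f + coeffD d k g := by simp [coeffD_eq]

lemma coeffD_smul (d k : ℕ) (z : ℂ) (f : Rmod d) :
    coeffD d k (z • f) = z * coeffD d k f := by simp [coeffD_eq]

lemma coeffD_zero (d k : ℕ) : coeffD d k (0 : Rmod d) = 0 := by simp [coeffD_eq]

lemma coeffD_neg (d k : ℕ) (f : Rmod d) : coeffD d k (-f) = - coeffD d k f := by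
  simp [coeffD_eq]

lemma coeffD_sum (d k : ℕ) {ι : Type*} (s : Finset ι) (g : ι → Rmod d) :
    coeffD d k (∑ t ∈ s, g t) = ∑ t ∈ s, coeffD d k (g t) := by simp [coeffD_eq]

lemma eps_pow_mk (d a : ℕ) : (eps d)^a = AdjoinRoot.mk _ (X^a : ℂ[X]) := by
  rw [eps, ← AdjoinRoot.mk_X, ← map_pow]

lemma eps_pow_zero (d a : ℕ) (h : d ≤ a) : (eps d)^a = (0 : Rmod d) := by
  rw [eps_pow_mk]
  have : (X^a : ℂ[X]) = X^d * X^(a-d) := by rw [← pow_add]; congr 1; omega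
  rw [this, map_mul, AdjoinRoot.mk_self, zero_mul]

lemma coeffD_eps_pow_mul (d a k : ℕ) (hk : k < d) (f : Rmod d) :
    coeffD d k ((eps d)^a * f) = if a ≤ k then coeffD d (k - a) f else 0 := by
  obtain ⟨F, rfl⟩ := AdjoinRoot.mk_surjective f
  rw [eps_pow_mk, ← map_mul, coeffD_mk d k hk, Polynomial.coeff_X_pow_mul']
  split
  · rw [coeffD_mk d _ (by omega)]
  · rfl

lemma key_expand (d : ℕ) (hd : 0 < d) (f : Rmod d) :
    f = ∑ a ∈ Finset.range d, coeffD d a f • (eps d)^a := by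
  obtain ⟨F, rfl⟩ := AdjoinRoot.mk_surjective f
  set G := F %ₘ (X^d : ℂ[X]) with hG
  have hmk : AdjoinRoot.mk (X^d : ℂ[X]) F = AdjoinRoot.mk _ G := by
    conv_lhs => rw [← Polynomial.modByMonic_add_div F (X ^ d)]
    rw [map_add, map_mul, AdjoinRoot.mk_self, zero_mul, add_zero]
  have hco : ∀ a, coeffD d a (AdjoinRoot.mk _ F) = G.coeff a := fun a => by
    unfold coeffD; rw [AdjoinRoot.modByMonicHom_mk]
  have hdeg : G.natDegree < d := by
    rcases eq_or_ne G 0 with h | h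
    · simpa [h] using hd
    · have := Polynomial.degree_modByMonic_lt F (monic_X_pow d (R := ℂ))
      rw [← hG] at this
      have this2 : G.degree < (d : ℕ) := by
        simpa [Polynomial.degree_X_pow] using this
      exact (Polynomial.natDegree_lt_iff_degree_lt h).2 this2
  conv_lhs => rw [hmk, Polynomial.as_sum_range' G d hdeg]
  rw [map_sum]
  refine Finset.sum_congr rfl fun a _ => ?_
  rw [hco, eps_pow_mk, ← Polynomial.C_mul_X_pow_eq_monomial, map_mul, Algebra.smul_def]
  congr 1

lemma expand (d n : ℕ) (hd : 0 < d) (v : Fin n → Rmod d) :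
    v = ∑ j : Fin n, ∑ a ∈ Finset.range d,
        coeffD d a (v j) • ((eps d)^a • (Pi.single j 1 : Fin n → Rmod d)) := by
  funext i
  rw [Finset.sum_apply, Finset.sum_eq_single_of_mem i (Finset.mem_univ i)
    (fun j _ hj => by
      rw [Finset.sum_apply]
      refine Finset.sum_eq_zero fun a _ => ?_
      rw [Pi.smul_apply, Pi.smul_apply, Pi.single_eq_of_ne (Ne.symm hj), smul_zero, smul_zero]),
    Finset.sum_apply]
  conv_lhs => rw [key_expand d hd (v i)]
  refine Finset.sum_congr rfl fun a _ => ?_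
  rw [Pi.smul_apply, Pi.smul_apply, Pi.single_eq_same, smul_eq_mul, mul_one]

lemma funMap_sum {M N : Type*} [AddCommMonoid M] [AddCommMonoid N] (F : M → N)
    (hadd : ∀ x y, F (x + y) = F x + F y) (h0 : F 0 = 0)
    {ι : Type*} (s : Finset ι) (g : ι → M) :
    F (∑ t ∈ s, g t) = ∑ t ∈ s, F (g t) := by
  classical
  induction s using Finset.induction_on with
  | empty => simpa using h0
  | insert _ _ h ih => rw [Finset.sum_insert h, Finset.sum_insert h, hadd, ih]

end Stmt6Aux


lemma tBij (c m n : ℕ) (hc : 0 < c) (hm : 0 < m)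
    (xm : Fin n → ℕ → Fin n → ℂ) (pm : Fin n → ℕ → Fin n → ℕ → ℂ) :
    (∑ i : Fin n, ∑ k ∈ Finset.range m, ∑ j : Fin n, ∑ a ∈ Finset.range (c*m),
        xm j a i * (if a + k < c*m then pm i (k + (c-1)*m - m*((a+k)/m)) j ((a+k) % m) else 0))
    = ∑ i : Fin n, ∑ k ∈ Finset.range m, ∑ j : Fin n, ∑ b ∈ Finset.range (c*m),
        pm j b i k * (if b ≤ k + (c-1)*m then xm i (k + (c-1)*m - b) j else 0) := by
  have hcm : (c-1)*m + m = c*m := by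
    have h : c - 1 + 1 = c := Nat.succ_pred_eq_of_pos hc
    calc (c-1)*m + m = ((c-1)+1)*m := by ring
      _ = c*m := by rw [h]
  -- massage a quadruple sum into the (i,j,z)-form, generic in the summand
  have massage : ∀ (F : Fin n → Fin n → ℕ → ℕ → ℂ) (P : ℕ → ℕ → Prop)
      [∀ k b, Decidable (P k b)],
      (∑ i : Fin n, ∑ k ∈ Finset.range m, ∑ j : Fin n, ∑ b ∈ Finset.range (c*m),
        (if P k b then F i j k b else 0))
      = ∑ i : Fin n, ∑ j : Fin n,
          ∑ z ∈ (Finset.range m ×ˢ Finset.range (c*m)).filter (fun z => P z.1 z.2),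
            F i j z.1 z.2 := by
    intro F P _
    refine Finset.sum_congr rfl fun i _ => ?_
    rw [Finset.sum_comm]
    refine Finset.sum_congr rfl fun j _ => ?_
    rw [Finset.sum_filter, ← Finset.sum_product']
  have L1 : (∑ i : Fin n, ∑ k ∈ Finset.range m, ∑ j : Fin n, ∑ a ∈ Finset.range (c*m),
        xm j a i * (if a + k < c*m then pm i (k + (c-1)*m - m*((a+k)/m)) j ((a+k) % m) else 0))
      = ∑ i : Fin n, ∑ j : Fin n,
          ∑ z ∈ (Finset.range m ×ˢ Finset.range (c*m)).filter (fun z => z.2 + z.1 < c*m),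
            xm j z.2 i * pm i (z.1 + (c-1)*m - m*((z.2+z.1)/m)) j ((z.2+z.1) % m) := by
    rw [← massage (fun i j k a => xm j a i * pm i (k + (c-1)*m - m*((a+k)/m)) j ((a+k) % m))
      (fun k a => a + k < c*m)]
    refine Finset.sum_congr rfl fun i _ => Finset.sum_congr rfl fun k _ =>
      Finset.sum_congr rfl fun j _ => Finset.sum_congr rfl fun a _ => ?_
    rw [mul_ite, mul_zero]
  have R1 : (∑ i : Fin n, ∑ k ∈ Finset.range m, ∑ j : Fin n, ∑ b ∈ Finset.range (c*m),
        pm j b i k * (if b ≤ k + (c-1)*m then xm i (k + (c-1)*m - b) j else 0))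
      = ∑ i : Fin n, ∑ j : Fin n,
          ∑ z ∈ (Finset.range m ×ˢ Finset.range (c*m)).filter (fun z => z.2 ≤ z.1 + (c-1)*m),
            pm j z.2 i z.1 * xm i (z.1 + (c-1)*m - z.2) j := by
    rw [← massage (fun i j k b => pm j b i k * xm i (k + (c-1)*m - b) j)
      (fun k b => b ≤ k + (c-1)*m)]
    refine Finset.sum_congr rfl fun i _ => Finset.sum_congr rfl fun k _ =>
      Finset.sum_congr rfl fun j _ => Finset.sum_congr rfl fun b _ => ?_
    rw [mul_ite, mul_zero]
  rw [L1, R1, Finset.sum_comm]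
  refine Finset.sum_congr rfl fun i _ => Finset.sum_congr rfl fun j _ => ?_
  -- now fixed i j : bijection between the two filtered index sets
  refine Finset.sum_nbij'
    (fun z => ((z.2+z.1) % m, z.1 + (c-1)*m - m*((z.2+z.1)/m)))
    (fun z => (z.2 % m, m*(c-1 - z.2/m) + z.1 - z.2 % m)) ?_ ?_ ?_ ?_ ?_
  · rintro ⟨k, a⟩ hz
    simp only [Finset.mem_filter, Finset.mem_product, Finset.mem_range] at hz ⊢
    obtain ⟨⟨hk, ha⟩, hak⟩ := hz
    have hqr := Nat.div_add_mod (a+k) m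
    have hr : (a+k) % m < m := Nat.mod_lt _ hm
    generalize hQ : (a+k)/m = q at hqr ⊢
    generalize hR : (a+k)%m = r at hqr hr ⊢
    have hq : q < c := by
      by_contra hq'
      push_neg at hq'
      have h1 : m * c ≤ m * q := Nat.mul_le_mul_left m hq'
      have h2 : m * c = c * m := Nat.mul_comm m c
      omega
    have hprod : m*(c-1-q) + m*q = m*(c-1) := by rw [← Nat.mul_add]; congr 1; omega
    have hmc1 : m*(c-1) = (c-1)*m := Nat.mul_comm _ _
    exact ⟨⟨hr, by omega⟩, by omega⟩
  · rintro ⟨k, b⟩ hz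
    simp only [Finset.mem_filter, Finset.mem_product, Finset.mem_range] at hz ⊢
    obtain ⟨⟨hk, hb⟩, hbk⟩ := hz
    have hqr := Nat.div_add_mod b m
    have hr : b % m < m := Nat.mod_lt _ hm
    generalize hQ : b/m = q at hqr ⊢
    generalize hR : b%m = r at hqr hr ⊢
    have hq : q < c := by
      by_contra hq'
      push_neg at hq'
      have h1 : m * c ≤ m * q := Nat.mul_le_mul_left m hq'
      have h2 : m * c = c * m := Nat.mul_comm m c
      omega
    have hprod : m*(c-1-q) + m*q = m*(c-1) := by rw [← Nat.mul_add]; congr 1; omega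
    have hmc1 : m*(c-1) = (c-1)*m := Nat.mul_comm _ _
    exact ⟨⟨hr, by omega⟩, by omega⟩
  · rintro ⟨k, a⟩ hz
    simp only [Finset.mem_filter, Finset.mem_product, Finset.mem_range] at hz
    obtain ⟨⟨hk, ha⟩, hak⟩ := hz
    simp only []
    have hqr := Nat.div_add_mod (a+k) m
    have hr : (a+k) % m < m := Nat.mod_lt _ hm
    generalize hQ : (a+k)/m = q at hqr ⊢
    generalize hR : (a+k)%m = r at hqr hr ⊢
    have hq : q < c := by
      by_contra hq'
      push_neg at hq'
      have h1 : m * c ≤ m * q := Nat.mul_le_mul_left m hq'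
      have h2 : m * c = c * m := Nat.mul_comm m c
      omega
    have hprod : m*(c-1-q) + m*q = m*(c-1) := by rw [← Nat.mul_add]; congr 1; omega
    have hmc1 : m*(c-1) = (c-1)*m := Nat.mul_comm _ _
    have hb' : k + (c-1)*m - m*q = m*(c-1-q)+k := by omega
    rw [hb', Nat.mul_add_mod, Nat.mul_add_div hm, Nat.mod_eq_of_lt hk,
      Nat.div_eq_of_lt hk, Nat.add_zero]
    have hq2 : m * (c - 1 - (c - 1 - q)) = m * q := by congr 1; omega
    rw [hq2]
    exact Prod.ext rfl (by omega)
  · rintro ⟨k, b⟩ hz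
    simp only [Finset.mem_filter, Finset.mem_product, Finset.mem_range] at hz
    obtain ⟨⟨hk, hb⟩, hbk⟩ := hz
    simp only []
    have hqr := Nat.div_add_mod b m
    have hr : b % m < m := Nat.mod_lt _ hm
    generalize hQ : b/m = q at hqr ⊢
    generalize hR : b%m = r at hqr hr ⊢
    have hq : q < c := by
      by_contra hq'
      push_neg at hq'
      have h1 : m * c ≤ m * q := Nat.mul_le_mul_left m hq'
      have h2 : m * c = c * m := Nat.mul_comm m c
      omega
    have hprod : m*(c-1-q) + m*q = m*(c-1) := by rw [← Nat.mul_add]; congr 1; omega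
    have hmc1 : m*(c-1) = (c-1)*m := Nat.mul_comm _ _
    have ha' : m*(c-1-q) + k - r + r = m*(c-1-q) + k := by omega
    rw [ha', Nat.mul_add_mod, Nat.mul_add_div hm, Nat.mod_eq_of_lt hk,
      Nat.div_eq_of_lt hk, Nat.add_zero]
    exact Prod.ext rfl (by omega)
  · rintro ⟨k, a⟩ hz
    simp only [Finset.mem_filter, Finset.mem_product, Finset.mem_range] at hz
    obtain ⟨⟨hk, ha⟩, hak⟩ := hz
    simp only []
    have hqr := Nat.div_add_mod (a+k) m
    have hr : (a+k) % m < m := Nat.mod_lt _ hm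
    generalize hQ : (a+k)/m = q at hqr ⊢
    generalize hR : (a+k)%m = r at hqr hr ⊢
    have hq : q < c := by
      by_contra hq'
      push_neg at hq'
      have h1 : m * c ≤ m * q := Nat.mul_le_mul_left m hq'
      have h2 : m * c = c * m := Nat.mul_comm m c
      omega
    have hprod : m*(c-1-q) + m*q = m*(c-1) := by rw [← Nat.mul_add]; congr 1; omega
    have hmc1 : m*(c-1) = (c-1)*m := Nat.mul_comm _ _
    have hidx : r + (c-1)*m - (k + (c-1)*m - m*q) = a := by omega
    rw [hidx]
    ring

open Stmt6Aux

section Test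
variable (c m n p : ℕ) (hc : 0 < c) (hm : 0 < m)
    (X U : (Fin p → Rmod c) → (Fin n → Rmod (c*m)))
    (Y V : (Fin n → Rmod (c*m)) → (Fin p → Rmod c))
    (ξ : (Fin n → Rmod (c*m)) →ₗ[Rmod (c*m)] (Fin n → Rmod (c*m)))
    (hXsmul : ∀ (z : ℂ) w, X (z • w) = z • X w)
    (hXc : ∀ w, X (eps c • w) = eps (c*m) ^ m • X w)
    (hUsmul : ∀ (z : ℂ) w, U (z • w) = z • U w)
    (hVc : ∀ v, V (eps (c*m) ^ m • v) = eps c • V v)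

include hXc hVc in
lemma tPm : ∀ (q : ℕ) (v : Fin n → Rmod (c*m)),
    X (V (eps (c*m) ^ (m*q) • v)) = eps (c*m) ^ (m*q) • X (V v) := by
  intro q
  induction q with
  | zero => intro v; simp
  | succ q ih =>
    intro v
    have h1 : m * (q+1) = m + m*q := by ring
    rw [h1, pow_add, mul_smul, hVc, hXc, ih, ← mul_smul, ← pow_add]

include hUsmul in
lemma tUmatch : ∀ (i : Fin n) (k : ℕ),
    coeffD (c*m) (k + (c-1)*m) ((U (-(Y (ξ (eps (c*m)^k • (Pi.single i 1 : Fin n → Rmod (c*m))))))) i)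
    = - coeffD (c*m) (k + (c-1)*m) (U (Y (eps (c*m)^k • ξ (Pi.single i 1))) i) := by
  intro i k
  rw [map_smul, ← neg_one_smul ℂ (Y (eps (c*m)^k • ξ (Pi.single i 1))), hUsmul,
    Pi.smul_apply, coeffD_smul, neg_one_mul]

include hc hm in
lemma tStepA (i : Fin n) : res (c*m)
    ((∑ k ∈ Finset.range m,
        (eps (c*m) ^ k • X (V (eps (c*m) ^ (m - 1 - k) • ξ (Pi.single i 1)))
         + eps (c*m) ^ k • U (Y (eps (c*m) ^ (m - 1 - k) • ξ (Pi.single i 1))))) i)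
    = ∑ k ∈ Finset.range m,
        (coeffD (c*m) (k + (c-1)*m) (X (V (eps (c*m)^k • ξ (Pi.single i 1))) i)
         + coeffD (c*m) (k + (c-1)*m) (U (Y (eps (c*m)^k • ξ (Pi.single i 1))) i)) := by
  have hcm : (c-1)*m + m = c*m := by
    have h : c - 1 + 1 = c := Nat.succ_pred_eq_of_pos hc
    calc (c-1)*m + m = ((c-1)+1)*m := by ring
      _ = c*m := by rw [h]
  rw [res, Finset.sum_apply, coeffD_sum]
  have hterm : ∀ k ∈ Finset.range m,
      coeffD (c*m) (c*m-1) ((eps (c*m) ^ k • X (V (eps (c*m) ^ (m - 1 - k) • ξ (Pi.single i 1)))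
         + eps (c*m) ^ k • U (Y (eps (c*m) ^ (m - 1 - k) • ξ (Pi.single i 1)))) i)
      = coeffD (c*m) (c*m-1-k) (X (V (eps (c*m) ^ (m - 1 - k) • ξ (Pi.single i 1))) i)
        + coeffD (c*m) (c*m-1-k) (U (Y (eps (c*m) ^ (m - 1 - k) • ξ (Pi.single i 1))) i) := by
    intro k hk
    have hk' := Finset.mem_range.mp hk
    rw [Pi.add_apply, Pi.smul_apply, Pi.smul_apply, smul_eq_mul, smul_eq_mul, coeffD_add,
      coeffD_eps_pow_mul _ _ _ (by omega), coeffD_eps_pow_mul _ _ _ (by omega),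
      if_pos (by omega : k ≤ c*m-1), if_pos (by omega : k ≤ c*m-1)]
  rw [Finset.sum_congr rfl hterm]
  calc (∑ k ∈ Finset.range m,
      (coeffD (c*m) (c*m-1-k) (X (V (eps (c*m) ^ (m - 1 - k) • ξ (Pi.single i 1))) i)
        + coeffD (c*m) (c*m-1-k) (U (Y (eps (c*m) ^ (m - 1 - k) • ξ (Pi.single i 1))) i)))
      = ∑ k ∈ Finset.range m, (fun k' =>
          coeffD (c*m) (k' + (c-1)*m) (X (V (eps (c*m)^k' • ξ (Pi.single i 1))) i)
          + coeffD (c*m) (k' + (c-1)*m) (U (Y (eps (c*m)^k' • ξ (Pi.single i 1))) i)) (m-1-k) := by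
        refine Finset.sum_congr rfl fun k hk => ?_
        have hk' := Finset.mem_range.mp hk
        have e1 : (m-1-k) + (c-1)*m = c*m-1-k := by omega
        rw [← e1]
    _ = _ := by
        have := Finset.sum_range_reflect (fun k' =>
          coeffD (c*m) (k' + (c-1)*m) (X (V (eps (c*m)^k' • ξ (Pi.single i 1))) i)
          + coeffD (c*m) (k' + (c-1)*m) (U (Y (eps (c*m)^k' • ξ (Pi.single i 1))) i)) m
        simpa using this

include hc hm hXc hXsmul hVc in
lemma tT1 (hXadd : ∀ w w', X (w + w') = X w + X w')
    (hVadd : ∀ v v', V (v + v') = V v + V v')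
    (hVsmul : ∀ (z : ℂ) v, V (z • v) = z • V v)
    (hX0 : X 0 = 0) (hV0 : V 0 = 0)
    (i : Fin n) (k : ℕ) (hk : k < m) :
    coeffD (c*m) (k + (c-1)*m) (X (V (eps (c*m)^k • ξ (Pi.single i 1))) i)
    = ∑ j : Fin n, ∑ a ∈ Finset.range (c*m),
        coeffD (c*m) a (ξ (Pi.single i 1) j) * (if a + k < c*m then
          coeffD (c*m) (k + (c-1)*m - m*((a+k)/m))
            (X (V (eps (c*m)^((a+k) % m) • (Pi.single j 1 : Fin n → Rmod (c*m)))) i)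
          else 0) := by
  have hD : 0 < c * m := by positivity
  have hcm : (c-1)*m + m = c*m := by
    have h : c - 1 + 1 = c := Nat.succ_pred_eq_of_pos hc
    calc (c-1)*m + m = ((c-1)+1)*m := by ring
      _ = c*m := by rw [h]
  have hN : k + (c-1)*m < c*m := by omega
  have hF0 : X (V (0 : Fin n → Rmod (c*m))) = 0 := by rw [hV0, hX0]
  have hFadd : ∀ v v', X (V (v + v')) = X (V v) + X (V v') := fun v v' => by
    rw [hVadd, hXadd]
  have hPm := tPm c m n p X V hXc hVc
  have step2 : eps (c*m)^k • ξ (Pi.single i 1)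
      = ∑ j : Fin n, ∑ a ∈ Finset.range (c*m),
          coeffD (c*m) a (ξ (Pi.single i 1) j) •
            (eps (c*m)^(a+k) • (Pi.single j 1 : Fin n → Rmod (c*m))) := by
    conv_lhs => rw [expand (c*m) n hD (ξ (Pi.single i 1))]
    rw [Finset.smul_sum]
    refine Finset.sum_congr rfl fun j _ => ?_
    rw [Finset.smul_sum]
    refine Finset.sum_congr rfl fun a _ => ?_
    rw [smul_comm, smul_smul, ← pow_add, add_comm k a]
  have step3 : X (V (eps (c*m)^k • ξ (Pi.single i 1)))
      = ∑ j : Fin n, ∑ a ∈ Finset.range (c*m),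
          coeffD (c*m) a (ξ (Pi.single i 1) j) •
            X (V (eps (c*m)^(a+k) • (Pi.single j 1 : Fin n → Rmod (c*m)))) := by
    rw [step2, funMap_sum (fun v => X (V v)) hFadd hF0]
    refine Finset.sum_congr rfl fun j _ => ?_
    rw [funMap_sum (fun v => X (V v)) hFadd hF0]
    refine Finset.sum_congr rfl fun a _ => ?_
    rw [hVsmul, hXsmul]
  rw [step3, Finset.sum_apply, coeffD_sum]
  refine Finset.sum_congr rfl fun j _ => ?_
  rw [Finset.sum_apply, coeffD_sum]
  refine Finset.sum_congr rfl fun a ha => ?_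
  rw [Pi.smul_apply, coeffD_smul]
  congr 1
  by_cases h : a + k < c*m
  · rw [if_pos h]
    have hqr : m * ((a+k)/m) + (a+k) % m = a + k := Nat.div_add_mod (a+k) m
    have hr : (a+k) % m < m := Nat.mod_lt _ hm
    have hq : (a+k)/m < c := by
      by_contra hq'
      push_neg at hq'
      have h1 : m * c ≤ m * ((a+k)/m) := Nat.mul_le_mul_left m hq'
      have h2 : m * c = c * m := Nat.mul_comm m c
      omega
    have hmq : m * ((a+k)/m) ≤ k + (c-1)*m := by
      have h1 : m * ((a+k)/m) ≤ m * (c-1) := Nat.mul_le_mul_left m (by omega)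
      have h2 : m * (c-1) = (c-1) * m := Nat.mul_comm _ _
      omega
    have hsplit : eps (c*m)^(a+k) • (Pi.single j 1 : Fin n → Rmod (c*m))
        = eps (c*m)^(m*((a+k)/m)) • (eps (c*m)^((a+k)%m) • (Pi.single j 1 : Fin n → Rmod (c*m))) := by
      rw [smul_smul, ← pow_add, hqr]
    rw [hsplit, hPm, Pi.smul_apply, smul_eq_mul,
      coeffD_eps_pow_mul _ _ _ hN, if_pos hmq]
  · rw [if_neg h]
    have hz : eps (c*m)^(a+k) = 0 := eps_pow_zero _ _ (by omega)
    rw [hz, zero_smul, hF0, Pi.zero_apply, coeffD_zero]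

include hc hm in
lemma tS1 (i : Fin n) (k : ℕ) (hk : k < m) :
    coeffD (c*m) (k + (c-1)*m) (ξ (X (V (eps (c*m)^k • (Pi.single i 1 : Fin n → Rmod (c*m))))) i)
    = ∑ j : Fin n, ∑ b ∈ Finset.range (c*m),
        coeffD (c*m) b (X (V (eps (c*m)^k • (Pi.single i 1 : Fin n → Rmod (c*m)))) j)
          * (if b ≤ k + (c-1)*m then coeffD (c*m) (k + (c-1)*m - b) (ξ (Pi.single j 1) i) else 0) := by
  have hD : 0 < c * m := by positivity
  have hcm : (c-1)*m + m = c*m := by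
    have h : c - 1 + 1 = c := Nat.succ_pred_eq_of_pos hc
    calc (c-1)*m + m = ((c-1)+1)*m := by ring
      _ = c*m := by rw [h]
  have hN : k + (c-1)*m < c*m := by omega
  have step1 : ξ (X (V (eps (c*m)^k • (Pi.single i 1 : Fin n → Rmod (c*m)))))
      = ∑ j : Fin n, ∑ b ∈ Finset.range (c*m),
          coeffD (c*m) b (X (V (eps (c*m)^k • (Pi.single i 1 : Fin n → Rmod (c*m)))) j) •
            (eps (c*m)^b • ξ (Pi.single j 1)) := by
    conv_lhs => rw [expand (c*m) n hD (X (V (eps (c*m)^k • (Pi.single i 1 : Fin n → Rmod (c*m)))))]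
    rw [map_sum]
    refine Finset.sum_congr rfl fun j _ => ?_
    rw [map_sum]
    refine Finset.sum_congr rfl fun b _ => ?_
    rw [← algebraMap_smul (Rmod (c*m)) (coeffD (c*m) b (X (V (eps (c*m)^k • (Pi.single i 1 : Fin n → Rmod (c*m)))) j)), map_smul, map_smul, algebraMap_smul]
  rw [step1, Finset.sum_apply, coeffD_sum]
  refine Finset.sum_congr rfl fun j _ => ?_
  rw [Finset.sum_apply, coeffD_sum]
  refine Finset.sum_congr rfl fun b _ => ?_
  rw [Pi.smul_apply, coeffD_smul]
  congr 1
  rw [Pi.smul_apply, smul_eq_mul, coeffD_eps_pow_mul _ _ _ hN]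

end Test


set_option maxHeartbeats 2000000 in
open Stmt6Aux in
/-- the map `μ(X,Y) = X^{R_d} Y^{R_d}` is a moment map generating
the `G_d(V)`-action on `M = Hom_{R_c}(𝕎,𝕍) ⊕ Hom_{R_c}(𝕍,𝕎)`:
`d⟨μ,ξ⟩ = ι_{ξ*}ω` for every `ξ ∈ 𝔤_d(V) = End_{R_d}(𝕍)`.  Concretely, since
`μ` is quadratic and `ω` is the constant form
`ω((A,B),(A',B')) = ⟨A,B'⟩_c − ⟨A',B⟩_c`, this says that for every point
`(X,Y) ∈ M` and tangent vector `(U,V)`,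
`⟨X^{R_d}V^{R_d} + U^{R_d}Y^{R_d}, ξ⟩_d = ⟨ξX, V⟩_c − ⟨U, −Yξ⟩_c`,
the right-hand side being `ω(ξ*_{(X,Y)}, (U,V))` with `ξ*_{(X,Y)} = (ξX, −Yξ)`.
All pairings are residue–trace pairings written out in coordinates, and
`A^{R_d}B^{R_d} : v ↦ Σ_k ε_d^k (AB)(ε_d^{d/c-1-k} v)`. -/
theorem stmt6 (c d n p : ℕ) (hc : 0 < c) (hcd : c ∣ d)
    (X U : (Fin p → Rmod c) → (Fin n → Rmod d))
    (Y V : (Fin n → Rmod d) → (Fin p → Rmod c))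
    (ξ : (Fin n → Rmod d) →ₗ[Rmod d] (Fin n → Rmod d))
    (hXadd : ∀ w w', X (w + w') = X w + X w')
    (hXsmul : ∀ (z : ℂ) w, X (z • w) = z • X w)
    (hXc : ∀ w, X (eps c • w) = eps d ^ (d / c) • X w)
    (hUadd : ∀ w w', U (w + w') = U w + U w')
    (hUsmul : ∀ (z : ℂ) w, U (z • w) = z • U w)
    (hUc : ∀ w, U (eps c • w) = eps d ^ (d / c) • U w)
    (hYadd : ∀ v v', Y (v + v') = Y v + Y v')
    (hYsmul : ∀ (z : ℂ) v, Y (z • v) = z • Y v)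
    (hYc : ∀ v, Y (eps d ^ (d / c) • v) = eps c • Y v)
    (hVadd : ∀ v v', V (v + v') = V v + V v')
    (hVsmul : ∀ (z : ℂ) v, V (z • v) = z • V v)
    (hVc : ∀ v, V (eps d ^ (d / c) • v) = eps c • V v) :
    -- `⟨Dμ_{(X,Y)}(U,V), ξ⟩_d` :
    (∑ i : Fin n, res d
        ((∑ k ∈ Finset.range (d / c),
            (eps d ^ k • X (V (eps d ^ (d / c - 1 - k) •
                ξ (Pi.single i 1 : Fin n → Rmod d)))
             + eps d ^ k • U (Y (eps d ^ (d / c - 1 - k) •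
                ξ (Pi.single i 1 : Fin n → Rmod d))))) i))
    -- `ω(ξ*_{(X,Y)}, (U,V)) = ⟨ξ∘X, V⟩_c − ⟨U, −Y∘ξ⟩_c` :
    = (∑ i : Fin n, ∑ k ∈ Finset.range (d / c),
        coeffD d (k + (c - 1) * (d / c))
          ((ξ (X (V (eps d ^ k • (Pi.single i 1 : Fin n → Rmod d))))) i))
      - ∑ i : Fin n, ∑ k ∈ Finset.range (d / c),
          coeffD d (k + (c - 1) * (d / c))
            ((U (-(Y (ξ (eps d ^ k • (Pi.single i 1 : Fin n → Rmod d)))))) i) := by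
  rcases Nat.eq_zero_or_pos d with hd | hd
  · subst hd
    simp [Nat.zero_div, res, coeffD_zero]
  · obtain ⟨m, rfl⟩ := hcd
    have hdc : c * m / c = m := Nat.mul_div_cancel_left m hc
    simp only [hdc] at hXc hUc hYc hVc ⊢
    have hm : 0 < m := by
      rcases Nat.eq_zero_or_pos m with h | h
      · subst h; simp at hd
      · exact h
    have hX0 : X 0 = 0 := by simpa using hXsmul 0 0
    have hV0 : V 0 = 0 := by simpa using hVsmul 0 0
    have stepA : ∀ i : Fin n, res (c*m)
        ((∑ k ∈ Finset.range m,
            (eps (c*m) ^ k • X (V (eps (c*m) ^ (m - 1 - k) • ξ (Pi.single i 1)))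
             + eps (c*m) ^ k • U (Y (eps (c*m) ^ (m - 1 - k) • ξ (Pi.single i 1))))) i)
        = ∑ k ∈ Finset.range m,
            (coeffD (c*m) (k + (c-1)*m) (X (V (eps (c*m)^k • ξ (Pi.single i 1))) i)
             + coeffD (c*m) (k + (c-1)*m) (U (Y (eps (c*m)^k • ξ (Pi.single i 1))) i)) :=
      fun i => tStepA (c:=c) (m:=m) (n:=n) (p:=p) (hc:=hc) (hm:=hm)
        (X:=X) (U:=U) (Y:=Y) (V:=V) (ξ:=ξ) i
    have hUmatch : ∀ (i : Fin n) (k : ℕ),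
        coeffD (c*m) (k + (c-1)*m)
          ((U (-(Y (ξ (eps (c*m)^k • (Pi.single i 1 : Fin n → Rmod (c*m))))))) i)
        = - coeffD (c*m) (k + (c-1)*m) (U (Y (eps (c*m)^k • ξ (Pi.single i 1))) i) :=
      tUmatch (c:=c) (m:=m) (n:=n) (p:=p) (U:=U) (Y:=Y) (ξ:=ξ) (hUsmul:=hUsmul)
    have hT1 : ∀ (i : Fin n) (k : ℕ), k < m →
        coeffD (c*m) (k + (c-1)*m) (X (V (eps (c*m)^k • ξ (Pi.single i 1))) i)
        = ∑ j : Fin n, ∑ a ∈ Finset.range (c*m),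
            coeffD (c*m) a (ξ (Pi.single i 1) j) * (if a + k < c*m then
              coeffD (c*m) (k + (c-1)*m - m*((a+k)/m))
                (X (V (eps (c*m)^((a+k) % m) • (Pi.single j 1 : Fin n → Rmod (c*m)))) i)
              else 0) :=
      fun i k hk => tT1 (c:=c) (m:=m) (n:=n) (p:=p) (hc:=hc) (hm:=hm)
        (X:=X) (V:=V) (ξ:=ξ) (hXc:=hXc) (hXsmul:=hXsmul) (hVc:=hVc)
        hXadd hVadd hVsmul hX0 hV0 i k hk
    have hS1 : ∀ (i : Fin n) (k : ℕ), k < m →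
        coeffD (c*m) (k + (c-1)*m)
          (ξ (X (V (eps (c*m)^k • (Pi.single i 1 : Fin n → Rmod (c*m))))) i)
        = ∑ j : Fin n, ∑ b ∈ Finset.range (c*m),
            coeffD (c*m) b (X (V (eps (c*m)^k • (Pi.single i 1 : Fin n → Rmod (c*m)))) j)
              * (if b ≤ k + (c-1)*m then
                  coeffD (c*m) (k + (c-1)*m - b) (ξ (Pi.single j 1) i) else 0) :=
      fun i k hk => tS1 (c:=c) (m:=m) (n:=n) (p:=p) (hc:=hc) (hm:=hm)
        (X:=X) (V:=V) (ξ:=ξ) i k hk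
    have hBij :
        (∑ i : Fin n, ∑ k ∈ Finset.range m, ∑ j : Fin n, ∑ a ∈ Finset.range (c*m),
            coeffD (c*m) a (ξ (Pi.single i 1) j) * (if a + k < c*m then
              coeffD (c*m) (k + (c-1)*m - m*((a+k)/m))
                (X (V (eps (c*m)^((a+k) % m) • (Pi.single j 1 : Fin n → Rmod (c*m)))) i)
              else 0))
        = ∑ i : Fin n, ∑ k ∈ Finset.range m, ∑ j : Fin n, ∑ b ∈ Finset.range (c*m),
            coeffD (c*m) b (X (V (eps (c*m)^k • (Pi.single i 1 : Fin n → Rmod (c*m)))) j)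
              * (if b ≤ k + (c-1)*m then
                  coeffD (c*m) (k + (c-1)*m - b) (ξ (Pi.single j 1) i) else 0) :=
      tBij c m n hc hm
        (fun j a i => coeffD (c*m) a (ξ (Pi.single i 1) j))
        (fun j b i k =>
          coeffD (c*m) b (X (V (eps (c*m)^k • (Pi.single i 1 : Fin n → Rmod (c*m)))) j))
    calc (∑ i : Fin n, res (c*m)
        ((∑ k ∈ Finset.range m,
            (eps (c*m) ^ k • X (V (eps (c*m) ^ (m - 1 - k) • ξ (Pi.single i 1)))
             + eps (c*m) ^ k • U (Y (eps (c*m) ^ (m - 1 - k) • ξ (Pi.single i 1))))) i))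
        = ∑ i : Fin n, ∑ k ∈ Finset.range m,
            (coeffD (c*m) (k + (c-1)*m) (X (V (eps (c*m)^k • ξ (Pi.single i 1))) i)
             + coeffD (c*m) (k + (c-1)*m) (U (Y (eps (c*m)^k • ξ (Pi.single i 1))) i)) := by
          exact Finset.sum_congr rfl fun i _ => stepA i
      _ = (∑ i : Fin n, ∑ k ∈ Finset.range m,
            coeffD (c*m) (k + (c-1)*m) (X (V (eps (c*m)^k • ξ (Pi.single i 1))) i))
          + ∑ i : Fin n, ∑ k ∈ Finset.range m,
            coeffD (c*m) (k + (c-1)*m) (U (Y (eps (c*m)^k • ξ (Pi.single i 1))) i) := by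
          rw [← Finset.sum_add_distrib]
          exact Finset.sum_congr rfl fun i _ => Finset.sum_add_distrib
      _ = (∑ i : Fin n, ∑ k ∈ Finset.range m,
            coeffD (c*m) (k + (c-1)*m)
              (ξ (X (V (eps (c*m)^k • (Pi.single i 1 : Fin n → Rmod (c*m))))) i))
          - ∑ i : Fin n, ∑ k ∈ Finset.range m,
            coeffD (c*m) (k + (c-1)*m)
              ((U (-(Y (ξ (eps (c*m)^k • (Pi.single i 1 : Fin n → Rmod (c*m))))))) i) := by
          have h1 : (∑ i : Fin n, ∑ k ∈ Finset.range m,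
              coeffD (c*m) (k + (c-1)*m) (X (V (eps (c*m)^k • ξ (Pi.single i 1))) i))
              = ∑ i : Fin n, ∑ k ∈ Finset.range m,
              coeffD (c*m) (k + (c-1)*m)
                (ξ (X (V (eps (c*m)^k • (Pi.single i 1 : Fin n → Rmod (c*m))))) i) := by
            exact (Finset.sum_congr rfl fun i _ =>
                Finset.sum_congr rfl fun k hk => hT1 i k (Finset.mem_range.mp hk)).trans
              (hBij.trans (Finset.sum_congr rfl fun i _ =>
                Finset.sum_congr rfl fun k hk => (hS1 i k (Finset.mem_range.mp hk)).symm))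
          have h2 : (∑ i : Fin n, ∑ k ∈ Finset.range m,
              coeffD (c*m) (k + (c-1)*m)
                ((U (-(Y (ξ (eps (c*m)^k • (Pi.single i 1 : Fin n → Rmod (c*m))))))) i))
              = - ∑ i : Fin n, ∑ k ∈ Finset.range m,
              coeffD (c*m) (k + (c-1)*m) (U (Y (eps (c*m)^k • ξ (Pi.single i 1))) i) := by
            rw [← Finset.sum_neg_distrib]
            refine Finset.sum_congr rfl fun i _ => ?_
            rw [← Finset.sum_neg_distrib]
            exact Finset.sum_congr rfl fun k _ => hUmatch i k
          rw [h1, h2, sub_neg_eq_add]
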